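/- Let A and B be positive semidefinite bounded self-adjoint operators on a separable Hilbert space H, let t > 0, 0 ≤ α ≤ 1/2 and 1 ≤ p ≤ ∞. Then ‖(A + tI)^{−α} B^α‖_p ≤ ‖(A + tI)^{−1/2} (B + tI)^{1/2}‖_∞^{2α} · ‖(B + tI)^{−α} B^α‖_p (whenever the right-hand side is finite). -/

import Mathlib

/-!
Since `(A + t)^{-α} B^α = ((A + t)^{-α} (B + t)^α) ((B + t)^{-α} B^α)` and approximation numbers,
hence Schatten norms, satisfy `s_k(XY) ≤ ‖X‖ s_k(Y)`, it suffices to prove Cordes' inequality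
`‖(A + t)^{-α} (B + t)^α‖ ≤ ‖(A + t)^{-1/2} (B + t)^{1/2}‖^{2α}`. For
`g x = ‖(A + t)^{-x} (B + t)^x‖` the C⋆-identity and `r(XY) = r(YX)` give
`g((a + b)/2)² ≤ g(a) g(b)`; as `g 0 = 1` and `g` is bounded on `[0, 1/2]`, iterating this
midpoint inequality yields `g x ≤ g(1/2)^{2x}`.
-/

open MeasureTheory ContinuousLinearMap
open scoped ENNReal NNReal InnerProductSpace

noncomputable section

namespace SubspaceLearning

variable {H : Type*} [NormedAddCommGroup H] [InnerProductSpace ℂ H] [CompleteSpace H]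

/-- The rank-one operator `x ⊗ x : u ↦ ⟨x,u⟩ x`. -/
def rankOne (x : H) : H →L[ℂ] H := (innerSL ℂ x).smulRight x

/-- The (uncentered) covariance operator of a measure. -/
def covOp [MeasurableSpace H] (ρ : Measure H) : H →L[ℂ] H := ∫ x, rankOne x ∂ρ

/-- The empirical covariance operator of `n` sample points. -/
def empCov {n : ℕ} (x : Fin n → H) : H →L[ℂ] H := (n : ℂ)⁻¹ • ∑ i, rankOne (x i)

/-- The (topological) support of a measure. -/
def mSupport [MeasurableSpace H] (ρ : Measure H) : Set H :=
  {x : H | ∀ s : Set H, IsOpen s → x ∈ s → ρ s ≠ 0}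

/-- `S_ρ`: the closed linear span of the support of `ρ`. -/
def Sspan [MeasurableSpace H] (ρ : Measure H) : Submodule ℂ H :=
  (Submodule.span ℂ (mSupport ρ)).topologicalClosure

/-- Orthogonal projection onto (the closure of) a subspace, as an endomorphism of `H`. -/
def proj (U : Submodule ℂ H) : H →L[ℂ] H :=
  haveI : CompleteSpace U.topologicalClosure :=
    U.isClosed_topologicalClosure.completeSpace_coe
  U.topologicalClosure.subtypeL.comp (U.topologicalClosure.orthogonalProjectionOnto)

/-- `approxNum A k` : the `k`-th approximation number (`= (k+1)`-th largest singular value,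
for compact `A`); for a positive compact self-adjoint operator it is the `(k+1)`-th
largest eigenvalue (with multiplicity). -/
def approxNum (A : H →L[ℂ] H) (k : ℕ) : ℝ :=
  sInf ((fun F : H →L[ℂ] H => ‖A - F‖) ''
    {F | ∃ V : Submodule ℂ H, FiniteDimensional ℂ V ∧ Module.finrank ℂ V ≤ k ∧
      LinearMap.range (F : H →ₗ[ℂ] H) ≤ V})

/-- Schatten `p`-norm, `‖A‖_p = (∑ σ_k(A)^p)^{1/p}` (operator norm for `p = ∞`). -/
def schatten (p : ℝ≥0∞) (A : H →L[ℂ] H) : ℝ≥0∞ :=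
  if p = ∞ then ENNReal.ofReal ‖A‖
  else (∑' k : ℕ, ENNReal.ofReal (approxNum A k ^ p.toReal)) ^ p.toReal⁻¹

/-- `A^α` for a positive operator `A`, via the continuous functional calculus. -/
def opow (A : H →L[ℂ] H) (α : ℝ) : H →L[ℂ] H := cfc (fun s : ℝ => s ^ α) A

/-- `(A + t I)^α` for a positive operator `A`, via the continuous functional calculus. -/
def resPow (A : H →L[ℂ] H) (t α : ℝ) : H →L[ℂ] H := cfc (fun s : ℝ => (s + t) ^ α) A

/-- The distance `d_{α,p}(U,V) = ‖(P_U − P_V) C^α‖_p`. -/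
def dap (C : H →L[ℂ] H) (α : ℝ) (p : ℝ≥0∞) (U V : Submodule ℂ H) : ℝ≥0∞ :=
  schatten p ((proj U - proj V).comp (opow C α))

/-- `W` is the span of eigenvectors of `A` corresponding to its `k` largest
eigenvalues (with multiplicity). -/
def IsTopEigenSubspace (A : H →L[ℂ] H) (k : ℕ) (W : Submodule ℂ H) : Prop :=
  ∃ u : Fin k → H, Orthonormal ℂ u ∧
    (∀ i : Fin k, A (u i) = (approxNum A (i : ℕ) : ℂ) • u i) ∧
    W = Submodule.span ℂ (Set.range u)

/-- Löwner partial order: `A ⪯ B` iff `⟨f, A f⟩ ≤ ⟨f, B f⟩` for all `f`. -/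
def Loewner (A B : H →L[ℂ] H) : Prop :=
  ∀ f : H, (⟪f, A f⟫_ℂ).re ≤ (⟪f, B f⟫_ℂ).re

end SubspaceLearning

section RealFunctions

open Set

lemma Real.rpow_le_max_one {x y : ℝ} (hx : 0 ≤ x) (hy0 : 0 ≤ y) (hy1 : y ≤ 1) :
    x ^ y ≤ max 1 x := by
  rcases le_total x 1 with h | h
  · exact le_max_of_le_left (Real.rpow_le_one hx h hy0)
  · exact le_max_of_le_right (Real.rpow_le_self_of_one_le h hy1)

/- Squaring moves `x` to `2x` or to `2x - 1`, so `h x ^ 2 ^ n` stays bounded, which forces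
`h x ≤ 1`. -/
lemma le_one_of_sq_le_mul {h : ℝ → ℝ} (h0 : h 0 = 1) (h1 : h 1 = 1)
    (hbdd : BddAbove (h '' Icc 0 1))
    (hmid : ∀ a ∈ Icc (0 : ℝ) 1, ∀ b ∈ Icc (0 : ℝ) 1, h ((a + b) / 2) ^ 2 ≤ h a * h b) :
    ∀ x ∈ Icc (0 : ℝ) 1, h x ≤ 1 := by
  obtain ⟨K, hK⟩ := hbdd
  have hsq : ∀ x ∈ Icc (0 : ℝ) 1, ∃ y ∈ Icc (0 : ℝ) 1, h x ^ 2 ≤ h y := by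
    rintro x ⟨hx0, hx1⟩
    rcases le_total x 2⁻¹ with hx | hx
    · refine ⟨2 * x, ⟨by linarith, by linarith⟩, ?_⟩
      have := hmid 0 ⟨le_rfl, zero_le_one⟩ (2 * x) ⟨by linarith, by linarith⟩
      rwa [show (0 + 2 * x) / 2 = x by ring, h0, one_mul] at this
    · refine ⟨2 * x - 1, ⟨by linarith, by linarith⟩, ?_⟩
      have := hmid (2 * x - 1) ⟨by linarith, by linarith⟩ 1 ⟨zero_le_one, le_rfl⟩
      rwa [show (2 * x - 1 + 1) / 2 = x by ring, h1, mul_one] at this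
  have hpow : ∀ n : ℕ, ∀ x ∈ Icc (0 : ℝ) 1, h x ^ 2 ^ n ≤ K := by
    intro n
    induction n with
    | zero => intro x hx; simpa using hK (mem_image_of_mem h hx)
    | succ n ih =>
      intro x hx
      obtain ⟨y, hy, hxy⟩ := hsq x hx
      calc h x ^ 2 ^ (n + 1) = (h x ^ 2) ^ 2 ^ n := by rw [← pow_mul, pow_succ']
        _ ≤ h y ^ 2 ^ n := pow_le_pow_left₀ (sq_nonneg _) hxy _
        _ ≤ K := ih y hy
  intro x hx
  by_contra! hgt
  obtain ⟨n, hn⟩ := pow_unbounded_of_one_lt K hgt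
  exact hn.not_ge ((pow_le_pow_right₀ hgt.le Nat.lt_two_pow_self.le).trans (hpow n x hx))

lemma le_rpow_of_sq_le_mul {f : ℝ → ℝ} (hf : ∀ x ∈ Icc (0 : ℝ) 1, 0 ≤ f x) (h0 : f 0 = 1)
    (h1 : 0 < f 1) (hbdd : BddAbove (f '' Icc 0 1))
    (hmid : ∀ a ∈ Icc (0 : ℝ) 1, ∀ b ∈ Icc (0 : ℝ) 1, f ((a + b) / 2) ^ 2 ≤ f a * f b) :
    ∀ x ∈ Icc (0 : ℝ) 1, f x ≤ f 1 ^ x := by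
  set c := f 1
  have hc : 0 ≤ c := h1.le
  have key := le_one_of_sq_le_mul (h := fun x => f x * c ^ (-x)) ?_ ?_ ?_ ?_
  · intro x hx
    calc f x = f x * c ^ (-x) * c ^ x := by
          rw [mul_assoc, ← Real.rpow_add h1, neg_add_cancel, Real.rpow_zero, mul_one]
      _ ≤ 1 * c ^ x := by gcongr; exact key x hx
      _ = c ^ x := one_mul _
  · simp [h0]
  · simp [c, Real.rpow_neg_one, h1.ne']
  · obtain ⟨K, hK⟩ := hbdd
    refine ⟨K * max 1 c⁻¹, ?_⟩
    rintro _ ⟨x, hx, rfl⟩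
    have hcx : c ^ (-x) ≤ max 1 c⁻¹ := by
      rw [Real.rpow_neg hc, ← Real.inv_rpow hc]
      exact Real.rpow_le_max_one (inv_nonneg.2 hc) hx.1 hx.2
    have hfx : f x ≤ K := hK (mem_image_of_mem f hx)
    exact mul_le_mul hfx hcx (by positivity) ((hf x hx).trans hfx)
  · intro a ha b hb
    calc (f ((a + b) / 2) * c ^ (-((a + b) / 2))) ^ 2
        = f ((a + b) / 2) ^ 2 * (c ^ (-a) * c ^ (-b)) := by
          rw [mul_pow, sq (c ^ _), ← Real.rpow_add h1, ← Real.rpow_add h1]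
          ring_nf
      _ ≤ f a * f b * (c ^ (-a) * c ^ (-b)) := by gcongr; exact hmid a ha b hb
      _ = f a * c ^ (-a) * (f b * c ^ (-b)) := by ring

end RealFunctions

lemma spectralRadius_mul_comm {𝕜 E : Type*} [NormedField 𝕜] [Ring E] [Algebra 𝕜 E] (a b : E) :
    spectralRadius 𝕜 (a * b) = spectralRadius 𝕜 (b * a) := by
  have h : ∀ x : E, spectralRadius 𝕜 x = ⨆ k ∈ spectrum 𝕜 x \ {0}, (‖k‖₊ : ℝ≥0∞) := by
    intro x
    refine le_antisymm (iSup₂_le fun k hk => ?_) (biSup_mono fun k hk => hk.1)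
    rcases eq_or_ne k 0 with rfl | hk0
    · simp
    · exact le_iSup₂ (f := fun k _ => (‖k‖₊ : ℝ≥0∞)) k ⟨hk, hk0⟩
  rw [h, h, spectrum.nonzero_mul_comm]

lemma IsSelfAdjoint.nnnorm_mul_sq {E : Type*} [CStarAlgebra E] {p q : E}
    (hp : IsSelfAdjoint p) (hq : IsSelfAdjoint q) :
    (‖p * q‖₊ : ℝ≥0∞) ^ 2 = spectralRadius ℂ (p * p * (q * q)) := by
  have hstar : star (p * q) = q * p := by rw [star_mul, hp.star_eq, hq.star_eq]
  calc (‖p * q‖₊ : ℝ≥0∞) ^ 2 = ‖star (p * q) * (p * q)‖₊ := by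
        rw [CStarRing.nnnorm_star_mul_self, ENNReal.coe_mul, sq]
    _ = spectralRadius ℂ (star (p * q) * (p * q)) :=
        (IsSelfAdjoint.star_mul_self _).spectralRadius_eq_nnnorm.symm
    _ = spectralRadius ℂ (q * (p * p * q)) := by rw [hstar]; simp only [mul_assoc]
    _ = spectralRadius ℂ (p * p * (q * q)) := by
        rw [spectralRadius_mul_comm, mul_assoc]

namespace SubspaceLearning

variable {H : Type*} [NormedAddCommGroup H] [InnerProductSpace ℂ H]

def finiteRankLE (k : ℕ) : Set (H →L[ℂ] H) :=
  {F | ∃ V : Submodule ℂ H, FiniteDimensional ℂ V ∧ Module.finrank ℂ V ≤ k ∧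
    LinearMap.range (F : H →ₗ[ℂ] H) ≤ V}

lemma approxNum_eq_sInf (A : H →L[ℂ] H) (k : ℕ) :
    approxNum A k = sInf ((fun F => ‖A - F‖) '' finiteRankLE k) := rfl

lemma zero_mem_finiteRankLE (k : ℕ) : (0 : H →L[ℂ] H) ∈ finiteRankLE k :=
  ⟨⊥, inferInstance, by simp, by simp⟩

lemma mul_mem_finiteRankLE (x : H →L[ℂ] H) {F : H →L[ℂ] H} {k : ℕ} (hF : F ∈ finiteRankLE k) :
    x * F ∈ finiteRankLE k := by
  obtain ⟨V, hV, hVk, hFV⟩ := hF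
  refine ⟨V.map (x : H →ₗ[ℂ] H), inferInstance, (Submodule.finrank_map_le _ _).trans hVk, ?_⟩
  rw [ContinuousLinearMap.mul_def, ContinuousLinearMap.toLinearMap_comp, LinearMap.range_comp]
  exact Submodule.map_mono hFV

lemma approxNum_nonneg (A : H →L[ℂ] H) (k : ℕ) : 0 ≤ approxNum A k :=
  Real.sInf_nonneg fun _ ⟨_, _, hF⟩ => hF ▸ norm_nonneg _

lemma approxNum_mul_le (x y : H →L[ℂ] H) (k : ℕ) :
    approxNum (x * y) k ≤ ‖x‖ * approxNum y k := by
  rw [approxNum_eq_sInf, approxNum_eq_sInf, ← smul_eq_mul (a := ‖x‖),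
    ← Real.sInf_smul_of_nonneg (norm_nonneg x)]
  refine le_csInf (Set.Nonempty.smul_set ⟨_, 0, zero_mem_finiteRankLE k, rfl⟩) ?_
  rintro _ ⟨_, ⟨F, hF, rfl⟩, rfl⟩
  calc sInf ((fun G => ‖x * y - G‖) '' finiteRankLE k) ≤ ‖x * y - x * F‖ :=
        csInf_le ⟨0, fun _ ⟨_, _, hG⟩ => hG ▸ norm_nonneg _⟩ ⟨x * F, mul_mem_finiteRankLE x hF, rfl⟩
    _ ≤ ‖x‖ • ‖y - F‖ := by rw [← mul_sub]; exact norm_mul_le _ _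

lemma schatten_mul_le {p : ℝ≥0∞} (hp : p ≠ 0) (x y : H →L[ℂ] H) :
    schatten p (x * y) ≤ ENNReal.ofReal ‖x‖ * schatten p y := by
  unfold schatten
  split_ifs with hpi
  · rw [← ENNReal.ofReal_mul (norm_nonneg x)]
    exact ENNReal.ofReal_le_ofReal (norm_mul_le x y)
  have hq : 0 < p.toReal := ENNReal.toReal_pos hp hpi
  have hterm : ∀ k : ℕ, ENNReal.ofReal (approxNum (x * y) k ^ p.toReal) ≤
      ENNReal.ofReal (‖x‖ ^ p.toReal) * ENNReal.ofReal (approxNum y k ^ p.toReal) := fun k => by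
    rw [← ENNReal.ofReal_mul (by positivity),
      ← Real.mul_rpow (norm_nonneg x) (approxNum_nonneg y k)]
    exact ENNReal.ofReal_le_ofReal
      (Real.rpow_le_rpow (approxNum_nonneg _ k) (approxNum_mul_le x y k) hq.le)
  calc (∑' k, ENNReal.ofReal (approxNum (x * y) k ^ p.toReal)) ^ p.toReal⁻¹
      ≤ (ENNReal.ofReal (‖x‖ ^ p.toReal) *
          ∑' k, ENNReal.ofReal (approxNum y k ^ p.toReal)) ^ p.toReal⁻¹ := by
        rw [← ENNReal.tsum_mul_left]
        exact ENNReal.rpow_le_rpow (ENNReal.tsum_le_tsum hterm) (by positivity)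
    _ = ENNReal.ofReal ‖x‖ * (∑' k, ENNReal.ofReal (approxNum y k ^ p.toReal)) ^ p.toReal⁻¹ := by
        rw [ENNReal.mul_rpow_of_nonneg _ _ (by positivity),
          ENNReal.ofReal_rpow_of_nonneg (by positivity) (by positivity),
          Real.rpow_rpow_inv (norm_nonneg x) hq.ne']

section ResolventPowers

variable [CompleteSpace H] {A B : H →L[ℂ] H} {t : ℝ}

lemma add_pos_of_mem_spectrum (hA : A.IsPositive) (ht : 0 < t) {s : ℝ}
    (hs : s ∈ spectrum ℝ A) : 0 < s + t := by
  have := spectrum_nonneg_of_nonneg ((ContinuousLinearMap.nonneg_iff_isPositive A).mpr hA) hs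
  positivity

lemma continuousOn_add_rpow_spectrum (hA : A.IsPositive) (ht : 0 < t) (β : ℝ) :
    ContinuousOn (fun s : ℝ => (s + t) ^ β) (spectrum ℝ A) := fun _ hs =>
  ((continuousAt_id.add continuousAt_const).rpow_const
    (Or.inl (add_pos_of_mem_spectrum hA ht hs).ne')).continuousWithinAt

lemma isSelfAdjoint_resPow (A : H →L[ℂ] H) (t β : ℝ) : IsSelfAdjoint (resPow A t β) :=
  cfc_predicate _ A

lemma resPow_mul_resPow (hA : A.IsPositive) (ht : 0 < t) (a b : ℝ) :
    resPow A t a * resPow A t b = resPow A t (a + b) := by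
  rw [resPow, resPow, ← cfc_mul _ _ A (continuousOn_add_rpow_spectrum hA ht a)
    (continuousOn_add_rpow_spectrum hA ht b)]
  exact cfc_congr fun s hs => (Real.rpow_add (add_pos_of_mem_spectrum hA ht hs) a b).symm

lemma resPow_zero (hA : A.IsPositive) (t : ℝ) : resPow A t 0 = 1 := by
  simp only [resPow, Real.rpow_zero]
  exact cfc_const_one ℝ A hA.isSelfAdjoint

lemma resPow_mul_resPow_neg (hA : A.IsPositive) (ht : 0 < t) (β : ℝ) :
    resPow A t β * resPow A t (-β) = 1 := by
  rw [resPow_mul_resPow hA ht, add_neg_cancel, resPow_zero hA]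

lemma isUnit_resPow (hA : A.IsPositive) (ht : 0 < t) (β : ℝ) : IsUnit (resPow A t β) :=
  ⟨⟨_, _, resPow_mul_resPow_neg hA ht β, by simpa using resPow_mul_resPow_neg hA ht (-β)⟩, rfl⟩

lemma norm_resPow_le [Nontrivial H] (hA : A.IsPositive) (ht : 0 < t) {β : ℝ} (hβ0 : 0 ≤ β)
    (hβ1 : β ≤ 1) : ‖resPow A t β‖ ≤ max 1 (‖A‖ + t) := by
  refine norm_cfc_le (by positivity) fun s hs => ?_
  have hst := add_pos_of_mem_spectrum hA ht hs
  have hsA : s ≤ ‖A‖ := (le_abs_self s).trans (spectrum.norm_le_norm_of_mem hs)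
  rw [Real.norm_of_nonneg (Real.rpow_nonneg hst.le _)]
  exact (Real.rpow_le_max_one hst.le hβ0 hβ1).trans (max_le_max le_rfl (by linarith))

lemma norm_resPow_neg_le (hA : A.IsPositive) (ht : 0 < t) {β : ℝ} (hβ0 : 0 ≤ β)
    (hβ1 : β ≤ 1) : ‖resPow A t (-β)‖ ≤ max 1 t⁻¹ := by
  refine norm_cfc_le (by positivity) fun s hs => ?_
  have hst := add_pos_of_mem_spectrum hA ht hs
  have hts : t ≤ s + t := by
    linarith [spectrum_nonneg_of_nonneg ((ContinuousLinearMap.nonneg_iff_isPositive A).mpr hA) hs]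
  rw [Real.norm_of_nonneg (Real.rpow_nonneg hst.le _), Real.rpow_neg hst.le,
    ← Real.inv_rpow hst.le]
  exact (Real.rpow_le_max_one (inv_nonneg.2 hst.le) hβ0 hβ1).trans
    (max_le_max le_rfl (inv_anti₀ ht hts))

/- `‖X‖² = r(X⋆X)` and `r(XY) = r(YX)` rearrange `X⋆X` into
`((A+t)^{-a}(B+t)^a) ((B+t)^b (A+t)^{-b})`. -/
lemma norm_resPow_neg_mul_resPow_midpoint_sq_le [Nontrivial H] (hA : A.IsPositive)
    (hB : B.IsPositive) (ht : 0 < t) (a b : ℝ) :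
    ‖resPow A t (-((a + b) / 2)) * resPow B t ((a + b) / 2)‖ ^ 2 ≤
      ‖resPow A t (-a) * resPow B t a‖ * ‖resPow A t (-b) * resPow B t b‖ := by
  have hu : resPow A t (-((a + b) / 2)) * resPow A t (-((a + b) / 2)) =
      resPow A t (-b) * resPow A t (-a) := by
    rw [resPow_mul_resPow hA ht, resPow_mul_resPow hA ht]; ring_nf
  have hv : resPow B t ((a + b) / 2) * resPow B t ((a + b) / 2) =
      resPow B t a * resPow B t b := by
    rw [resPow_mul_resPow hB ht, resPow_mul_resPow hB ht]; ring_nf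
  have hstar : ‖resPow B t b * resPow A t (-b)‖₊ = ‖resPow A t (-b) * resPow B t b‖₊ := by
    rw [← nnnorm_star, star_mul, (isSelfAdjoint_resPow A t _).star_eq,
      (isSelfAdjoint_resPow B t _).star_eq]
  have key : (‖resPow A t (-((a + b) / 2)) * resPow B t ((a + b) / 2)‖₊ : ℝ≥0∞) ^ 2 ≤
      ‖resPow A t (-a) * resPow B t a‖₊ * ‖resPow A t (-b) * resPow B t b‖₊ :=
    calc _ = spectralRadius ℂ (resPow A t (-b) * resPow A t (-a) *
            (resPow B t a * resPow B t b)) := by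
          rw [IsSelfAdjoint.nnnorm_mul_sq (isSelfAdjoint_resPow A t _) (isSelfAdjoint_resPow B t _),
            hu, hv]
      _ = spectralRadius ℂ (resPow A t (-a) * resPow B t a *
            (resPow B t b * resPow A t (-b))) := by
          rw [mul_assoc, spectralRadius_mul_comm]; simp only [mul_assoc]
      _ ≤ ‖resPow A t (-a) * resPow B t a * (resPow B t b * resPow A t (-b))‖₊ :=
          spectrum.spectralRadius_le_nnnorm _
      _ ≤ ‖resPow A t (-a) * resPow B t a‖₊ * ‖resPow A t (-b) * resPow B t b‖₊ := by
          rw [← hstar, ← ENNReal.coe_mul, ENNReal.coe_le_coe]; exact nnnorm_mul_le _ _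
  rw [← ENNReal.coe_pow, ← ENNReal.coe_mul, ENNReal.coe_le_coe] at key
  exact_mod_cast key

lemma norm_resPow_neg_mul_resPow_le (hA : A.IsPositive) (hB : B.IsPositive) (ht : 0 < t)
    {α : ℝ} (hα0 : 0 ≤ α) (hα : α ≤ 2⁻¹) :
    ‖resPow A t (-α) * resPow B t α‖ ≤ ‖resPow A t (-2⁻¹) * resPow B t 2⁻¹‖ ^ (2 * α) := by
  rcases subsingleton_or_nontrivial H with _ | _
  · rw [Subsingleton.elim (resPow A t (-α) * resPow B t α) 0, norm_zero]
    positivity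
  set f : ℝ → ℝ := fun s => ‖resPow A t (-(s / 2)) * resPow B t (s / 2)‖ with hf
  have hbdd : BddAbove (f '' Set.Icc 0 1) := by
    refine ⟨max 1 t⁻¹ * max 1 (‖B‖ + t), ?_⟩
    rintro _ ⟨_, ⟨hs0, hs1⟩, rfl⟩
    exact (norm_mul_le _ _).trans (mul_le_mul (norm_resPow_neg_le hA ht (by linarith)
      (by linarith)) (norm_resPow_le hB ht (by linarith) (by linarith)) (norm_nonneg _)
      (by positivity))
  have hmid : ∀ a ∈ Set.Icc (0 : ℝ) 1, ∀ b ∈ Set.Icc (0 : ℝ) 1,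
      f ((a + b) / 2) ^ 2 ≤ f a * f b := by
    intro a _ b _
    have := norm_resPow_neg_mul_resPow_midpoint_sq_le hA hB ht (a / 2) (b / 2)
    rwa [show (a / 2 + b / 2) / 2 = (a + b) / 2 / 2 by ring] at this
  have h0 : f 0 = 1 := by simp [hf, resPow_zero hA, resPow_zero hB]
  have h1 : 0 < f 1 :=
    norm_pos_iff.2 ((isUnit_resPow hA ht _).mul (isUnit_resPow hB ht _)).ne_zero
  have := le_rpow_of_sq_le_mul (f := f) (fun _ _ => norm_nonneg _) h0 h1 hbdd hmid (2 * α)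
    ⟨by linarith, by linarith⟩
  simpa [hf] using this

theorem statement16 (A B : H →L[ℂ] H) (hA : A.IsPositive) (hB : B.IsPositive)
    {t : ℝ} (ht : 0 < t) {α : ℝ} (hα0 : 0 ≤ α) (hα : α ≤ 2⁻¹) {p : ℝ≥0∞} (hp : 1 ≤ p) :
    schatten p ((resPow A t (-α)).comp (opow B α)) ≤
      ENNReal.ofReal (‖(resPow A t (-2⁻¹)).comp (resPow B t 2⁻¹)‖ ^ (2 * α)) *
        schatten p ((resPow B t (-α)).comp (opow B α)) := by
  have factor : (resPow A t (-α)).comp (opow B α) =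
      (resPow A t (-α) * resPow B t α) * (resPow B t (-α) * opow B α) := by
    rw [mul_assoc, ← mul_assoc (resPow B t α), resPow_mul_resPow_neg hB ht, one_mul]; rfl
  rw [factor]
  exact (schatten_mul_le (zero_lt_one.trans_le hp).ne' _ _).trans
    (mul_le_mul_left (ENNReal.ofReal_le_ofReal
      (norm_resPow_neg_mul_resPow_le hA hB ht hα0 hα)) _)

end ResolventPowers

end SubspaceLearning
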